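/- In the reduced type-B Birman–Murakami–Wenzl algebra BB_n(R), for every i with 1 ≤ i ≤ n−1: e_iY_ie_i = A·e_i and X_iY_iX_iY_i = Y_iX_iY_iX_i. -/
import Mathlib


namespace BMWB

inductive Gen (n : ℕ) : Type
  | X : Fin (n - 1) → Gen n
  | Xinv : Fin (n - 1) → Gen n
  | Y : 0 < n → Gen n
  | Yinv : 0 < n → Gen n

variable (R : Type) [CommRing R]

def fX {n : ℕ} (i : Fin (n - 1)) : FreeAlgebra R (Gen n) := FreeAlgebra.ι R (Gen.X i)
def fXinv {n : ℕ} (i : Fin (n - 1)) : FreeAlgebra R (Gen n) := FreeAlgebra.ι R (Gen.Xinv i)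
def fY {n : ℕ} (h : 0 < n) : FreeAlgebra R (Gen n) := FreeAlgebra.ι R (Gen.Y h)
def fYinv {n : ℕ} (h : 0 < n) : FreeAlgebra R (Gen n) := FreeAlgebra.ι R (Gen.Yinv h)
def fe {n : ℕ} (deli : R) (i : Fin (n - 1)) : FreeAlgebra R (Gen n) :=
  1 - deli • (fX R i - fXinv R i)

variable (lam lami deli q0 q1 A : R) (n : ℕ)

/-- The defining relations of the reduced Birman-Murakami-Wenzl algebra of Coxeter type B. -/
inductive Rel : FreeAlgebra R (Gen n) → FreeAlgebra R (Gen n) → Prop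
  | XXinv (i : Fin (n - 1)) : Rel (fX R i * fXinv R i) 1
  | XinvX (i : Fin (n - 1)) : Rel (fXinv R i * fX R i) 1
  | YYinv (h : 0 < n) : Rel (fY R h * fYinv R h) 1
  | YinvY (h : 0 < n) : Rel (fYinv R h * fY R h) 1
  | comm (i j : Fin (n - 1)) (h : (j : ℕ) + 1 < (i : ℕ)) :
      Rel (fX R i * fX R j) (fX R j * fX R i)
  | braid (i j : Fin (n - 1)) (h : (i : ℕ) + 1 = (j : ℕ)) :
      Rel (fX R i * fX R j * fX R i) (fX R j * fX R i * fX R j)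
  | Xe (i : Fin (n - 1)) : Rel (fX R i * fe R deli i) (lam • fe R deli i)
  | eX (i : Fin (n - 1)) : Rel (fe R deli i * fX R i) (lam • fe R deli i)
  | eXe (i j : Fin (n - 1)) (h : (j : ℕ) + 1 = (i : ℕ)) :
      Rel (fe R deli i * fX R j * fe R deli i) (lami • fe R deli i)
  | eXinve (i j : Fin (n - 1)) (h : (j : ℕ) + 1 = (i : ℕ)) :
      Rel (fe R deli i * fXinv R j * fe R deli i) (lam • fe R deli i)
  | bYXYX (h : 0 < n) (i : Fin (n - 1)) (hi : (i : ℕ) = 0) :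
      Rel (fX R i * fY R h * fX R i * fY R h) (fY R h * fX R i * fY R h * fX R i)
  | Ysq (h : 0 < n) : Rel (fY R h * fY R h) (q1 • fY R h + q0 • (1 : FreeAlgebra R (Gen n)))
  | YXYe (h : 0 < n) (i : Fin (n - 1)) (hi : (i : ℕ) = 0) :
      Rel (fY R h * fX R i * fY R h * fe R deli i) (fe R deli i)
  | Ycomm (h : 0 < n) (i : Fin (n - 1)) (hi : 0 < (i : ℕ)) :
      Rel (fY R h * fX R i) (fX R i * fY R h)
  | eYe (h : 0 < n) (i : Fin (n - 1)) (hi : (i : ℕ) = 0) :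
      Rel (fe R deli i * fY R h * fe R deli i) (A • fe R deli i)

/-- The reduced Birman-Murakami-Wenzl algebra of Coxeter type B, `BB_n(R)`,
presented by generators and relations. -/
abbrev BB : Type := RingQuot (Rel R lam lami deli q0 q1 A n)

noncomputable def mk : FreeAlgebra R (Gen n) →ₐ[R] BB R lam lami deli q0 q1 A n :=
  RingQuot.mkAlgHom R (Rel R lam lami deli q0 q1 A n)

/-- The generator `Y` (junk value `1` if `n = 0`). -/
noncomputable def YY : BB R lam lami deli q0 q1 A n :=
  if h : 0 < n then mk R lam lami deli q0 q1 A n (fY R h) else 1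

/-- The inverse of the generator `Y`. -/
noncomputable def YYi : BB R lam lami deli q0 q1 A n :=
  if h : 0 < n then mk R lam lami deli q0 q1 A n (fYinv R h) else 1

/-- The generator `X_i`, `1 ≤ i ≤ n-1` (junk value `1` out of range). -/
noncomputable def XX (i : ℕ) : BB R lam lami deli q0 q1 A n :=
  if h : i - 1 < n - 1 then mk R lam lami deli q0 q1 A n (fX R ⟨i - 1, h⟩) else 1

/-- The inverse `X_i⁻¹`. -/
noncomputable def XXi (i : ℕ) : BB R lam lami deli q0 q1 A n :=
  if h : i - 1 < n - 1 then mk R lam lami deli q0 q1 A n (fXinv R ⟨i - 1, h⟩) else 1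

/-- The element `e_i := 1 - δ⁻¹ (X_i - X_i⁻¹)`. -/
noncomputable def ee (i : ℕ) : BB R lam lami deli q0 q1 A n :=
  1 - deli • (XX R lam lami deli q0 q1 A n i - XXi R lam lami deli q0 q1 A n i)

/-- `Y_i := X_{i-1} ⋯ X_1 Y X_1⁻¹ ⋯ X_{i-1}⁻¹`. -/
noncomputable def Yn : ℕ → BB R lam lami deli q0 q1 A n
  | 0 => 1
  | 1 => YY R lam lami deli q0 q1 A n
  | (k + 2) => XX R lam lami deli q0 q1 A n (k + 1) * Yn (k + 1) * XXi R lam lami deli q0 q1 A n (k + 1)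

/-- `Y'_i := X_{i-1} ⋯ X_1 Y X_1 ⋯ X_{i-1}`. -/
noncomputable def Yp : ℕ → BB R lam lami deli q0 q1 A n
  | 0 => 1
  | 1 => YY R lam lami deli q0 q1 A n
  | (k + 2) => XX R lam lami deli q0 q1 A n (k + 1) * Yp (k + 1) * XX R lam lami deli q0 q1 A n (k + 1)

/-- The inverse of `Y'_i`. -/
noncomputable def Ypi : ℕ → BB R lam lami deli q0 q1 A n
  | 0 => 1
  | 1 => YYi R lam lami deli q0 q1 A n
  | (k + 2) => XXi R lam lami deli q0 q1 A n (k + 1) * Ypi (k + 1) * XXi R lam lami deli q0 q1 A n (k + 1)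

/-- The set of the images of the generators (and their inverses) of `BB_{m+1}` inside `BB_n`.
Its `Algebra.adjoin` is the image of the canonical algebra homomorphism `BB_{m+1} → BB_n`. -/
noncomputable def genSet (m : ℕ) : Set (BB R lam lami deli q0 q1 A n) :=
  {a | a = YY R lam lami deli q0 q1 A n ∨ a = YYi R lam lami deli q0 q1 A n ∨
    ∃ i, 1 ≤ i ∧ i ≤ m ∧ (a = XX R lam lami deli q0 q1 A n i ∨ a = XXi R lam lami deli q0 q1 A n i)}

/-- The image of the canonical algebra homomorphism `BB_{m+1}(R) → BB_n(R)`, realized as the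
subalgebra generated by the images of the generators `Y, Y⁻¹, X_1, …, X_m` (and inverses). -/
noncomputable def sub (m : ℕ) : Subalgebra R (BB R lam lami deli q0 q1 A n) :=
  Algebra.adjoin R (genSet R lam lami deli q0 q1 A n m)

/-- `X(i,j) = X_i X_{i+1} ⋯ X_j`. -/
noncomputable def Xprod (i j : ℕ) : BB R lam lami deli q0 q1 A n :=
  ((List.range (j + 1 - i)).map (fun k => XX R lam lami deli q0 q1 A n (i + k))).prod

/-- `E(i,j) = e_i e_{i+2} ⋯ e_j`. -/
noncomputable def Eprod (i j : ℕ) : BB R lam lami deli q0 q1 A n :=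
  ((List.range ((j - i) / 2 + 1)).map (fun k => ee R lam lami deli q0 q1 A n (i + 2 * k))).prod

/-- `H_1 = e_1`, `H_{m+1} = e_{m+1} X(m+2, 2m+1) X(m+1, 2m) H_m`. -/
noncomputable def H : ℕ → BB R lam lami deli q0 q1 A n
  | 0 => 1
  | 1 => ee R lam lami deli q0 q1 A n 1
  | (k + 2) => ee R lam lami deli q0 q1 A n (k + 2) *
      Xprod R lam lami deli q0 q1 A n (k + 3) (2 * k + 3) *
      Xprod R lam lami deli q0 q1 A n (k + 2) (2 * k + 2) * H (k + 1)

/-! ### Auxiliary lemmas -/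

private theorem intertwine_inv' {S : Type} [Monoid S] {a x xi y yi : S}
    (hx : x * xi = 1) (hy : yi * y = 1) (h : a * x = y * a) : a * xi = yi * a := by
  calc a * xi = yi * y * (a * xi) := by rw [hy, one_mul]
    _ = yi * (y * a) * xi := by simp only [mul_assoc]
    _ = yi * (a * x) * xi := by rw [h]
    _ = yi * a * (x * xi) := by simp only [mul_assoc]
    _ = yi * a := by rw [hx, mul_one]

private theorem comm3' {S : Type} [Monoid S] {c a y b : S} (h1 : c * a = a * c)
    (h2 : c * y = y * c) (h3 : c * b = b * c) :
    c * (a * y * b) = a * y * b * c := by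
  calc c * (a * y * b) = c * a * y * b := by simp only [mul_assoc]
    _ = a * c * y * b := by rw [h1]
    _ = a * (c * y) * b := by rw [mul_assoc a c y]
    _ = a * (y * c) * b := by rw [h2]
    _ = a * y * (c * b) := by simp only [mul_assoc]
    _ = a * y * (b * c) := by rw [h3]
    _ = a * y * b * c := by rw [← mul_assoc]

/-- The key conjugation step: if the pair `(x1, y)` satisfies the two identities, then so does
the pair `(x2, x1 * y * x1⁻¹)`, by conjugating with `s = x1 * x2`. -/
private theorem conj_step {R : Type} [CommRing R] {S : Type} [Ring S] [Algebra R S]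
    (A deli : R) {x1 x2 x1i x2i y : S}
    (h1 : x1 * x1i = 1) (h1' : x1i * x1 = 1) (h2 : x2 * x2i = 1) (h2' : x2i * x2 = 1)
    (hbr : x1 * x2 * x1 = x2 * x1 * x2)
    (hyc : x2 * y = y * x2)
    (IH1 : (1 - deli • (x1 - x1i)) * y * (1 - deli • (x1 - x1i))
      = A • (1 - deli • (x1 - x1i)))
    (IH2 : x1 * y * x1 * y = y * x1 * y * x1) :
    (1 - deli • (x2 - x2i)) * (x1 * y * x1i) * (1 - deli • (x2 - x2i))
        = A • (1 - deli • (x2 - x2i)) ∧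
    x2 * (x1 * y * x1i) * x2 * (x1 * y * x1i)
        = (x1 * y * x1i) * x2 * (x1 * y * x1i) * x2 := by
  set e1 := 1 - deli • (x1 - x1i) with he1
  set e2 := 1 - deli • (x2 - x2i) with he2
  have hs1 : (x1 * x2) * (x2i * x1i) = 1 := by
    rw [mul_assoc, ← mul_assoc x2, h2, one_mul, h1]
  have hs_x : (x1 * x2) * x1 = x2 * (x1 * x2) := by rw [hbr, mul_assoc]
  have hs_xi : (x1 * x2) * x1i = x2i * (x1 * x2) := intertwine_inv' h1 h2' hs_x
  have hs_y : (x1 * x2) * y = (x1 * y * x1i) * (x1 * x2) := by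
    have key : (x1 * y * x1i) * (x1 * x2) = x1 * y * x2 := by
      rw [← mul_assoc, mul_assoc (x1 * y) x1i x1, h1', mul_one]
    rw [key, mul_assoc, hyc, ← mul_assoc]
  have hs_e : (x1 * x2) * e1 = e2 * (x1 * x2) := by
    rw [he1, he2]
    simp only [mul_sub, sub_mul, mul_one, one_mul, mul_smul_comm, smul_mul_assoc,
      hs_x, hs_xi]
  have reassoc : ∀ {a b : S}, (x1 * x2) * a = b * (x1 * x2) →
      ∀ c : S, (x1 * x2) * (a * c) = b * ((x1 * x2) * c) :=
    fun h c => by rw [← mul_assoc, h, mul_assoc]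
  constructor
  · have h1t : (x1 * x2) * (e1 * y * e1 * (x2i * x1i)) = e2 * (x1 * y * x1i) * e2 := by
      rw [show e1 * y * e1 * (x2i * x1i) = e1 * (y * (e1 * (x2i * x1i))) by
        simp only [mul_assoc]]
      rw [reassoc hs_e, reassoc hs_y, reassoc hs_e, hs1, mul_one]
      simp only [mul_assoc]
    have h2t : (x1 * x2) * (e1 * y * e1 * (x2i * x1i)) = A • e2 := by
      rw [IH1, smul_mul_assoc, mul_smul_comm, ← mul_assoc, hs_e, mul_assoc, hs1, mul_one]
    exact h1t.symm.trans h2t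
  · have h1t : (x1 * x2) * (x1 * y * x1 * y * (x2i * x1i))
        = x2 * (x1 * y * x1i) * x2 * (x1 * y * x1i) := by
      rw [show x1 * y * x1 * y * (x2i * x1i) = x1 * (y * (x1 * (y * (x2i * x1i)))) by
        simp only [mul_assoc]]
      rw [reassoc hs_x, reassoc hs_y, reassoc hs_x, reassoc hs_y, hs1, mul_one]
      simp only [mul_assoc]
    have h2t : (x1 * x2) * (y * x1 * y * x1 * (x2i * x1i))
        = (x1 * y * x1i) * x2 * (x1 * y * x1i) * x2 := by
      rw [show y * x1 * y * x1 * (x2i * x1i) = y * (x1 * (y * (x1 * (x2i * x1i)))) by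
        simp only [mul_assoc]]
      rw [reassoc hs_y, reassoc hs_x, reassoc hs_y, reassoc hs_x, hs1, mul_one]
      simp only [mul_assoc]
    have h3t : (x1 * x2) * (x1 * y * x1 * y * (x2i * x1i))
        = (x1 * x2) * (y * x1 * y * x1 * (x2i * x1i)) := by rw [IH2]
    exact h1t.symm.trans (h3t.trans h2t)

section Lemmas

variable {R} {lam lami deli q0 q1 A} {n}

local notation "Xg" => XX R lam lami deli q0 q1 A n
local notation "Xig" => XXi R lam lami deli q0 q1 A n
local notation "Eg" => ee R lam lami deli q0 q1 A n
local notation "Yg" => Yn R lam lami deli q0 q1 A n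
local notation "Ymk" => YY R lam lami deli q0 q1 A n
local notation "mkh" => mk R lam lami deli q0 q1 A n

private theorem mk_rel' {a b : FreeAlgebra R (Gen n)}
    (h : Rel R lam lami deli q0 q1 A n a b) : mkh a = mkh b :=
  RingQuot.mkAlgHom_rel R h

private theorem XX_def {i : ℕ} (h : i - 1 < n - 1) : Xg i = mkh (fX R ⟨i - 1, h⟩) :=
  dif_pos h

private theorem XXi_def {i : ℕ} (h : i - 1 < n - 1) : Xig i = mkh (fXinv R ⟨i - 1, h⟩) :=
  dif_pos h

private theorem YY_def (h : 0 < n) : Ymk = mkh (fY R h) := dif_pos h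

private theorem ee_def {i : ℕ} (h : i - 1 < n - 1) : Eg i = mkh (fe R deli ⟨i - 1, h⟩) := by
  rw [ee, fe, XX_def h, XXi_def h, map_sub, map_smul, map_sub, map_one]

private theorem XX_mul_XXi {i : ℕ} (h1 : 1 ≤ i) (h2 : i ≤ n - 1) : Xg i * Xig i = 1 := by
  have h : i - 1 < n - 1 := by omega
  rw [XX_def h, XXi_def h, ← map_mul, mk_rel' (Rel.XXinv _), map_one]

private theorem XXi_mul_XX {i : ℕ} (h1 : 1 ≤ i) (h2 : i ≤ n - 1) : Xig i * Xg i = 1 := by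
  have h : i - 1 < n - 1 := by omega
  rw [XX_def h, XXi_def h, ← map_mul, mk_rel' (Rel.XinvX _), map_one]

private theorem braid_BB {i : ℕ} (h1 : 1 ≤ i) (h2 : i + 1 ≤ n - 1) :
    Xg i * Xg (i + 1) * Xg i = Xg (i + 1) * Xg i * Xg (i + 1) := by
  have ha : i - 1 < n - 1 := by omega
  have hb : (i + 1) - 1 < n - 1 := by omega
  rw [XX_def ha, XX_def hb, ← map_mul, ← map_mul, ← map_mul, ← map_mul]
  exact mk_rel' (Rel.braid _ _ (by simp only [Fin.val_mk]; omega))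

private theorem comm_BB {i j : ℕ} (hj : 1 ≤ j) (hij : j + 1 < i) (hi : i ≤ n - 1) :
    Xg i * Xg j = Xg j * Xg i := by
  have ha : i - 1 < n - 1 := by omega
  have hb : j - 1 < n - 1 := by omega
  rw [XX_def ha, XX_def hb, ← map_mul, ← map_mul]
  exact mk_rel' (Rel.comm _ _ (by simp only [Fin.val_mk]; omega))

private theorem Ycomm_BB {j : ℕ} (hj : 2 ≤ j) (hjn : j ≤ n - 1) :
    Ymk * Xg j = Xg j * Ymk := by
  have hn : 0 < n := by omega
  have ha : j - 1 < n - 1 := by omega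
  rw [YY_def hn, XX_def ha, ← map_mul, ← map_mul]
  exact mk_rel' (Rel.Ycomm hn _ (by simp only [Fin.val_mk]; omega))

private theorem commY : ∀ i j : ℕ, 1 ≤ i → i + 1 ≤ j → j ≤ n - 1 →
    Xg j * Yg i = Yg i * Xg j
  | 0, _, hi, _, _ => absurd hi (by omega)
  | 1, j, _, hij, hj => by
      rw [show Yg 1 = Ymk from rfl]
      exact (Ycomm_BB (by omega) hj).symm
  | (k + 2), j, _, hij, hj => by
      have IH := commY (k + 1) j (by omega) (by omega) hj
      have hc : Xg j * Xg (k + 1) = Xg (k + 1) * Xg j := comm_BB (by omega) (by omega) hj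
      have hci : Xg j * Xig (k + 1) = Xig (k + 1) * Xg j :=
        intertwine_inv' (XX_mul_XXi (by omega) (by omega))
          (XXi_mul_XX (by omega) (by omega)) hc
      rw [show Yg (k + 2) = Xg (k + 1) * Yg (k + 1) * Xig (k + 1) from rfl]
      exact comm3' hc IH hci

private theorem eYe_base (hn2 : 2 ≤ n) : Eg 1 * Ymk * Eg 1 = A • Eg 1 := by
  have h : (1 : ℕ) - 1 < n - 1 := by omega
  have hn : 0 < n := by omega
  rw [ee_def h, YY_def hn, ← map_mul, ← map_mul, ← map_smul]
  exact mk_rel' (Rel.eYe hn _ rfl)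

private theorem braid_base (hn2 : 2 ≤ n) :
    Xg 1 * Ymk * Xg 1 * Ymk = Ymk * Xg 1 * Ymk * Xg 1 := by
  have h : (1 : ℕ) - 1 < n - 1 := by omega
  have hn : 0 < n := by omega
  rw [XX_def h, YY_def hn, ← map_mul, ← map_mul, ← map_mul, ← map_mul, ← map_mul,
    ← map_mul]
  exact mk_rel' (Rel.bYXYX hn _ rfl)

private theorem main_aux : ∀ i : ℕ, 1 ≤ i → i ≤ n - 1 →
    Eg i * Yg i * Eg i = A • Eg i ∧
    Xg i * Yg i * Xg i * Yg i = Yg i * Xg i * Yg i * Xg i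
  | 0, hi, _ => absurd hi (by omega)
  | 1, _, h1 => by
      have hn2 : 2 ≤ n := by omega
      rw [show Yg 1 = Ymk from rfl]
      exact ⟨eYe_base hn2, braid_base hn2⟩
  | (k + 2), _, hkn => by
      obtain ⟨IH1, IH2⟩ := main_aux (k + 1) (by omega) (by omega)
      have hxk : Xg (k + 1) * Xig (k + 1) = 1 := XX_mul_XXi (by omega) (by omega)
      have hxk' : Xig (k + 1) * Xg (k + 1) = 1 := XXi_mul_XX (by omega) (by omega)
      have hx2 : Xg (k + 2) * Xig (k + 2) = 1 := XX_mul_XXi (by omega) hkn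
      have hx2' : Xig (k + 2) * Xg (k + 2) = 1 := XXi_mul_XX (by omega) hkn
      have hbr : Xg (k + 1) * Xg (k + 2) * Xg (k + 1)
          = Xg (k + 2) * Xg (k + 1) * Xg (k + 2) := braid_BB (by omega) (by omega)
      have hyc : Xg (k + 2) * Yg (k + 1) = Yg (k + 1) * Xg (k + 2) :=
        commY (k + 1) (k + 2) (by omega) (by omega) hkn
      have := conj_step A deli hxk hxk' hx2 hx2' hbr hyc IH1 IH2
      rw [show Yg (k + 2) = Xg (k + 1) * Yg (k + 1) * Xig (k + 1) from rfl]
      exact this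

end Lemmas

/-- In `BB_n(R)`: `e_i Y_i e_i = A e_i` and `X_i Y_i X_i Y_i = Y_i X_i Y_i X_i`
(Lemma 4, (\ref{lem2ds}), (\ref{lem2zopf})). -/
theorem BB_eYe_and_braid (R : Type) [CommRing R] [IsDomain R]
    (q qi lam lami del deli q0 q0i q1 A x : R)
    (hq : q * qi = 1) (hlam : lam * lami = 1) (hdel : del * deli = 1) (hq0u : q0 * q0i = 1)
    (hdelta : del = q - qi) (hx : x * del = del - lam + lami) (n : ℕ) :
    ∀ i, 1 ≤ i → i ≤ n - 1 →
      ee R lam lami deli q0 q1 A n i * Yn R lam lami deli q0 q1 A n i * ee R lam lami deli q0 q1 A n i = A • ee R lam lami deli q0 q1 A n i ∧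
      XX R lam lami deli q0 q1 A n i * Yn R lam lami deli q0 q1 A n i * XX R lam lami deli q0 q1 A n i * Yn R lam lami deli q0 q1 A n i =
        Yn R lam lami deli q0 q1 A n i * XX R lam lami deli q0 q1 A n i * Yn R lam lami deli q0 q1 A n i * XX R lam lami deli q0 q1 A n i := by
  intro i h1 h2
  exact main_aux i h1 h2

end BMWB
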